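/- arXiv:0912.4778 — 2 statements merged into one kernel-verified Lean document; each statement's English description precedes it below -/
import Mathlib

section
/- For every integer k ≥ 4, the k-rung Möbius ladder M_k is almost 4-connected. -/
/-!
Numbering `v_i ↦ i` and `u_i ↦ k + i` identifies `M_k` with the circulant graph on `ℤ/2k`
with jumps `1` and `k`. Suppose `S` separates nonempty vertex sets `X` and `Y`. The successor
of the last vertex of each maximal cyclic run of `X` or of `Y` lies in `S`, so if `|S| ≤ 3` one
of the two sets, say `X`, is a single cyclic interval `[b, b + D]`, whose outer neighbours
`b - 1` and `b + D + 1` lie in `S`. If `X` has fewer than `k` points, the antipodal copy `X + k`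
lies in `S` too; otherwise `Y` fits in an arc of at most `k` points and `Y + k` lies in `S`.
Hence `|S| ≥ min (|X|, |Y|) + 2`, unless both sets have at least two runs, in which case
`|S| ≥ 4`.
-/

variable {V : Type} [Fintype V]

/-- A separation of `G`: a pair of vertex sets covering `V(G)` with no edge
between `A − B` and `B − A`. -/
def IsSeparation (G : SimpleGraph V) (A B : Set V) : Prop :=
  A ∪ B = Set.univ ∧ ∀ a ∈ A \ B, ∀ b ∈ B \ A, ¬ G.Adj a b

/-- `G` is 3-connected: it has at least 4 vertices and stays connected after deleting
any set of at most 2 vertices. -/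
def ThreeConnected (G : SimpleGraph V) : Prop :=
  4 ≤ Fintype.card V ∧ ∀ S : Set V, S.ncard ≤ 2 → (G.induce (Sᶜ : Set V)).Connected

/-- `G` is 4-connected: it has at least 5 vertices and stays connected after deleting
any set of at most 3 vertices. -/
def FourConnected (G : SimpleGraph V) : Prop :=
  5 ≤ Fintype.card V ∧ ∀ S : Set V, S.ncard ≤ 3 → (G.induce (Sᶜ : Set V)).Connected

/-- `G` is almost 4-connected: it is 3-connected and for every separation `(A,B)` of
order three, one of `A − B`, `B − A` contains at most one vertex. -/
def AlmostFourConnected (G : SimpleGraph V) : Prop :=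
  ThreeConnected G ∧ ∀ A B : Set V, IsSeparation G A B → (A ∩ B).ncard = 3 →
    (A \ B).ncard ≤ 1 ∨ (B \ A).ncard ≤ 1

/-- The `k`-rung Möbius ladder `M_k`: two paths `v_1, …, v_k` (`Sum.inl`) and
`u_1, …, u_k` (`Sum.inr`), rungs `v_i u_i`, plus the edges `v_1 u_k` and `u_1 v_k`. -/
def mobiusLadder (k : ℕ) : SimpleGraph (Fin k ⊕ Fin k) :=
  SimpleGraph.fromRel (fun a b =>
    match a, b with
    | Sum.inl i, Sum.inl j => (j : ℕ) = (i : ℕ) + 1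
    | Sum.inr i, Sum.inr j => (j : ℕ) = (i : ℕ) + 1
    | Sum.inl i, Sum.inr j =>
        (i : ℕ) = (j : ℕ) ∨ ((i : ℕ) = 0 ∧ (j : ℕ) = k - 1) ∨
        ((j : ℕ) = 0 ∧ (i : ℕ) = k - 1)
    | _, _ => False)

namespace ZMod

lemma natCast_eq_natCast_iff_of_lt {n x y : ℕ} (hx : x < n) (hy : y < n) :
    (x : ZMod n) = y ↔ x = y := by
  refine ⟨fun h => ?_, congrArg _⟩
  simpa [val_natCast_of_lt hx, val_natCast_of_lt hy] using congrArg val h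

variable {n : ℕ} [NeZero n]

lemma val_neg_one_eq : (-1 : ZMod n).val = n - 1 := by
  obtain ⟨m, rfl⟩ := Nat.exists_eq_succ_of_ne_zero (NeZero.ne n)
  exact val_neg_one m

lemma val_add_eq_or (u v : ZMod n) :
    (u + v).val = u.val + v.val ∨ (u + v).val + n = u.val + v.val := by
  rcases lt_or_ge (u.val + v.val) n with h | h
  · exact .inl (val_add_of_lt h)
  · exact .inr (val_add_val_of_le h).symm

lemma natCast_sub_natCast_eq_iff {x y c : ℕ} (hx : x < n) (hy : y < n) (hc : c < n) :
    (x : ZMod n) - y = c ↔ x = y + c ∨ x + n = y + c := by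
  rw [sub_eq_iff_eq_add']
  constructor
  · intro h
    have hval := congrArg val h
    rw [val_natCast_of_lt hx] at hval
    rcases val_add_eq_or (y : ZMod n) c with h' | h' <;>
      rw [val_natCast_of_lt hy, val_natCast_of_lt hc, ← hval] at h' <;> omega
  · rintro (h | h)
    · rw [h, Nat.cast_add]
    · rw [← Nat.cast_add, ← h, Nat.cast_add, natCast_self, add_zero]

end ZMod

section CyclicIntervals

variable {n : ℕ} [NeZero n]

def rightEnds (X : Set (ZMod n)) : Set (ZMod n) := {x | x ∈ X ∧ x + 1 ∉ X}

lemma rightEnds_nonempty {X : Set (ZMod n)} (hX : X.Nonempty) (hXc : Xᶜ.Nonempty) :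
    (rightEnds X).Nonempty := by
  obtain ⟨x, hx⟩ := hX
  obtain ⟨y, hy⟩ := hXc
  by_contra! hends
  have hclosed : ∀ t : ℕ, x + t ∈ X := by
    intro t
    induction t with
    | zero => simpa using hx
    | succ t ih =>
      by_contra h
      rw [Nat.cast_succ, ← add_assoc] at h
      exact hends.subset ⟨ih, h⟩
  exact hy (by simpa using hclosed (y - x).val)

lemma add_natCast_mem_of_rightEnds_subset {X : Set (ZMod n)} {a x : ZMod n}
    (ha : rightEnds X ⊆ {a}) (hx : x ∈ X) {j : ℕ} (hj : j ≤ (a - x).val) : x + j ∈ X := by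
  induction j with
  | zero => simpa using hx
  | succ j ih =>
    have hjn : j < n := by have := ZMod.val_lt (a - x); omega
    have hxj : x + j ≠ a := by
      rintro rfl
      rw [add_sub_cancel_left, ZMod.val_natCast_of_lt hjn] at hj
      omega
    by_contra h
    rw [Nat.cast_succ, ← add_assoc] at h
    exact hxj (ha ⟨ih (by omega), h⟩)

lemma mem_iff_val_sub_le_of_rightEnds_subset {X : Set (ZMod n)} {a b : ZMod n}
    (ha : rightEnds X ⊆ {a}) (hb : b ∈ X) (hb' : b - 1 ∉ X) (z : ZMod n) :
    z ∈ X ↔ (z - b).val ≤ (a - b).val := by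
  constructor
  · intro hz
    by_contra! hlt
    -- walking up from `z` to `a` passes through `b - 1`
    have hwalk : (b - 1 - z).val ≤ (a - z).val := by
      have h₁ := ZMod.val_add_eq_or (a - z) (z - b)
      have h₂ := ZMod.val_add_eq_or (b - 1 - z) (z - b)
      rw [sub_add_sub_cancel] at h₁ h₂
      rw [show b - 1 - b = -1 by ring, ZMod.val_neg_one_eq] at h₂
      have := ZMod.val_lt (a - z)
      have := ZMod.val_lt (b - 1 - z)
      have := ZMod.val_lt (z - b)
      omega
    have := add_natCast_mem_of_rightEnds_subset ha hz hwalk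
    rw [ZMod.natCast_zmod_val, add_sub_cancel] at this
    exact hb' this
  · intro hz
    simpa using add_natCast_mem_of_rightEnds_subset ha hb hz

lemma exists_mem_iff_val_sub_le_of_ncard_rightEnds {X : Set (ZMod n)} (hXc : Xᶜ.Nonempty)
    (hX : (rightEnds X).ncard = 1) : ∃ b : ZMod n, ∃ D : ℕ, ∀ z, z ∈ X ↔ (z - b).val ≤ D := by
  obtain ⟨a, ha⟩ := Set.ncard_eq_one.mp hX
  have haX : a ∈ X := (ha.symm ▸ rfl : a ∈ rightEnds X).1
  obtain ⟨c, hc, hc'⟩ := rightEnds_nonempty hXc (by rw [compl_compl]; exact ⟨a, haX⟩)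
  refine ⟨c + 1, (a - (c + 1)).val, mem_iff_val_sub_le_of_rightEnds_subset ha.subset ?_ ?_⟩
  · simpa using hc'
  · simpa using hc

end CyclicIntervals

section Separated

variable {α β : Type*}

structure AreSeparated (G : SimpleGraph α) (X Y : Set α) : Prop where
  left_nonempty : X.Nonempty
  right_nonempty : Y.Nonempty
  disjoint : Disjoint X Y
  not_adj : ∀ x ∈ X, ∀ y ∈ Y, ¬ G.Adj x y

namespace AreSeparated

variable {G : SimpleGraph α} {X Y : Set α}

lemma symm (h : AreSeparated G X Y) : AreSeparated G Y X :=
  ⟨h.right_nonempty, h.left_nonempty, h.disjoint.symm,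
    fun y hy x hx hadj => h.not_adj x hx y hy hadj.symm⟩

lemma compl_left_nonempty (h : AreSeparated G X Y) : Xᶜ.Nonempty :=
  h.right_nonempty.mono fun _ hy => h.disjoint.notMem_of_mem_right hy

lemma image {H : SimpleGraph β} (e : G ≃g H) (h : AreSeparated G X Y) :
    AreSeparated H (e '' X) (e '' Y) := by
  refine ⟨h.left_nonempty.image e, h.right_nonempty.image e,
    (Set.disjoint_image_iff e.injective).mpr h.disjoint, ?_⟩
  rintro _ ⟨x, hx, rfl⟩ _ ⟨y, hy, rfl⟩
  rw [e.map_adj_iff]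
  exact h.not_adj x hx y hy

end AreSeparated

lemma exists_areSeparated_of_not_preconnected {G : SimpleGraph α} {S : Set α}
    (h : ¬ (G.induce Sᶜ).Preconnected) : ∃ X Y, AreSeparated G X Y ∧ X ∪ Y = Sᶜ := by
  simp only [SimpleGraph.Preconnected, not_forall] at h
  obtain ⟨u, v, huv⟩ := h
  let C : Set ↥(Sᶜ) := {w | (G.induce Sᶜ).Reachable u w}
  refine ⟨Subtype.val '' C, Subtype.val '' Cᶜ, ⟨⟨u, ⟨u, .rfl, rfl⟩⟩, ⟨v, ⟨v, huv, rfl⟩⟩,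
    (Set.disjoint_image_iff Subtype.val_injective).mpr disjoint_compl_right, ?_⟩, ?_⟩
  · rintro _ ⟨x, hx, rfl⟩ _ ⟨y, hy, rfl⟩ hadj
    exact hy (hx.trans (SimpleGraph.Adj.reachable (by simpa using hadj)))
  · rw [← Set.image_union, Set.union_compl_self, Set.image_univ, Subtype.range_val]

section IsSeparation

variable {W : Type} {G : SimpleGraph W} {A B : Set W}

lemma IsSeparation.areSeparated (h : IsSeparation G A B) (hA : (A \ B).Nonempty)
    (hB : (B \ A).Nonempty) : AreSeparated G (A \ B) (B \ A) :=
  ⟨hA, hB, disjoint_sdiff_sdiff, h.2⟩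

lemma IsSeparation.compl_union_sdiff (h : IsSeparation G A B) :
    ((A \ B) ∪ (B \ A))ᶜ = A ∩ B := by
  ext z
  have hz : z ∈ A ∪ B := h.1 ▸ Set.mem_univ z
  simp only [Set.mem_union] at hz
  simp only [Set.mem_compl_iff, Set.mem_union, Set.mem_sdiff, Set.mem_inter_iff]
  tauto

end IsSeparation

end Separated

theorem almostFourConnected_of_separator_bound {G : SimpleGraph V} (hV : 4 ≤ Fintype.card V)
    (h : ∀ X Y, AreSeparated G X Y → 4 ≤ (X ∪ Y)ᶜ.ncard ∨ X.ncard + 2 ≤ (X ∪ Y)ᶜ.ncard ∨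
      Y.ncard + 2 ≤ (X ∪ Y)ᶜ.ncard) :
    AlmostFourConnected G := by
  have h3 : ∀ X Y, AreSeparated G X Y → 3 ≤ (X ∪ Y)ᶜ.ncard := fun X Y hXY => by
    have := (Set.ncard_pos).2 hXY.left_nonempty
    have := (Set.ncard_pos).2 hXY.right_nonempty
    have := h X Y hXY
    omega
  refine ⟨⟨hV, fun S hS => (SimpleGraph.connected_iff _).2 ⟨?_, ?_⟩⟩, fun A B hAB hAB3 => ?_⟩
  · by_contra hpre
    obtain ⟨X, Y, hXY, hS'⟩ := exists_areSeparated_of_not_preconnected hpre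
    have := h3 X Y hXY
    rw [hS', compl_compl] at this
    omega
  · refine (Set.nonempty_compl.2 fun hSu => ?_).to_subtype
    rw [hSu, Set.ncard_univ, Nat.card_eq_fintype_card] at hS
    omega
  · by_contra! hbig
    have hsep := hAB.areSeparated (Set.nonempty_of_ncard_ne_zero (by omega))
      (Set.nonempty_of_ncard_ne_zero (by omega))
    have := h _ _ hsep
    rw [hAB.compl_union_sdiff] at this
    omega

lemma Set.ncard_add_two_le_of_injective {α β : Type*} [Finite β] {f : α → β}
    (hf : f.Injective) {Z : Set α} {S : Set β} {p q : β} (hpq : p ≠ q) (hp : p ∈ S)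
    (hq : q ∈ S) (hZ : ∀ z ∈ Z, f z ∈ S ∧ f z ≠ p ∧ f z ≠ q) : Z.ncard + 2 ≤ S.ncard := by
  have hqZ : q ∉ f '' Z := by rintro ⟨z, hz, rfl⟩; exact (hZ z hz).2.2 rfl
  have hpZ : p ∉ insert q (f '' Z) := by
    rintro (rfl | ⟨z, hz, rfl⟩)
    · exact hpq rfl
    · exact (hZ z hz).2.1 rfl
  calc Z.ncard + 2 = (insert p (insert q (f '' Z))).ncard := by
        rw [Set.ncard_insert_of_notMem hpZ, Set.ncard_insert_of_notMem hqZ,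
          Set.ncard_image_of_injective _ hf]
    _ ≤ S.ncard := by
        refine Set.ncard_le_ncard ?_
        rintro _ (rfl | rfl | ⟨z, hz, rfl⟩)
        exacts [hp, hq, (hZ z hz).1]

namespace AreSeparated

open SimpleGraph

variable {G : Type*} [AddCommGroup G] {s : Set G} {X Y : Set G}

lemma add_notMem (h : AreSeparated (circulantGraph s) X Y) {c : G} (hc : c ∈ s) {x : G}
    (hx : x ∈ X) : x + c ∉ Y := fun hy =>
  h.not_adj x hx _ hy ⟨fun hxy => h.disjoint.ne_of_mem hx hy hxy,
    .inr (show x + c - x ∈ s by rwa [add_sub_cancel_left])⟩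

lemma sub_notMem (h : AreSeparated (circulantGraph s) X Y) {c : G} (hc : c ∈ s) {x : G}
    (hx : x ∈ X) : x - c ∉ Y := fun hy =>
  h.not_adj x hx _ hy ⟨fun hxy => h.disjoint.ne_of_mem hx hy hxy,
    .inl (show x - (x - c) ∈ s by rwa [sub_sub_cancel])⟩

end AreSeparated

lemma AreSeparated.ncard_rightEnds_add_le {n : ℕ} [NeZero n] {s : Set (ZMod n)} (hs : 1 ∈ s)
    {X Y : Set (ZMod n)} (h : AreSeparated (SimpleGraph.circulantGraph s) X Y) :
    (rightEnds X).ncard + (rightEnds Y).ncard ≤ (X ∪ Y)ᶜ.ncard := by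
  have hsub : (· + 1) '' rightEnds X ∪ (· + 1) '' rightEnds Y ⊆ (X ∪ Y)ᶜ := by
    rintro _ (⟨x, ⟨hx, hx'⟩, rfl⟩ | ⟨y, ⟨hy, hy'⟩, rfl⟩)
    · exact fun hX => hX.elim hx' (h.add_notMem hs hx)
    · exact fun hY => hY.elim (h.symm.add_notMem hs hy) hy'
  have hdisj : Disjoint ((· + 1) '' rightEnds X) ((· + 1) '' rightEnds Y) :=
    (Set.disjoint_image_iff (add_left_injective 1)).2
      (h.disjoint.mono (fun _ hx => hx.1) (fun _ hy => hy.1))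
  calc (rightEnds X).ncard + (rightEnds Y).ncard
      = ((· + 1) '' rightEnds X ∪ (· + 1) '' rightEnds Y).ncard := by
        rw [Set.ncard_union_eq hdisj, Set.ncard_image_of_injective _ (add_left_injective 1),
          Set.ncard_image_of_injective _ (add_left_injective 1)]
    _ ≤ (X ∪ Y)ᶜ.ncard := Set.ncard_le_ncard hsub

def mobiusCirculant (k : ℕ) : SimpleGraph (ZMod (2 * k)) :=
  SimpleGraph.circulantGraph {1, (k : ZMod (2 * k))}

namespace AreSeparated

variable {k : ℕ} [NeZero k] {X Y : Set (ZMod (2 * k))}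

lemma mobiusCirculant_interval_ends (h : AreSeparated (mobiusCirculant k) X Y)
    {b : ZMod (2 * k)} {D : ℕ} (hX : ∀ z, z ∈ X ↔ (z - b).val ≤ D) :
    D + 2 < 2 * k ∧ b + ((D + 1 : ℕ) : ZMod (2 * k)) ∈ (X ∪ Y)ᶜ ∧ b - 1 ∈ (X ∪ Y)ᶜ := by
  have hjump1 : (1 : ZMod (2 * k)) ∈ ({1, (k : ZMod (2 * k))} : Set _) := .inl rfl
  have hpY : b + ((D + 1 : ℕ) : ZMod (2 * k)) ∉ Y := by
    have hlast : b + (D : ZMod (2 * k)) ∈ X := (hX _).2 (by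
      rw [add_sub_cancel_left, ZMod.val_natCast]; exact Nat.mod_le _ _)
    simpa [add_assoc] using h.add_notMem hjump1 hlast
  have hD : D + 2 < 2 * k := by
    obtain ⟨y, hy⟩ := h.right_nonempty
    have hyD : D < (y - b).val := not_le.1 fun hle => h.disjoint.ne_of_mem ((hX y).2 hle) hy rfl
    have hyp : (y - b).val ≠ D + 1 := fun he => hpY (by
      rw [← he, ZMod.natCast_zmod_val, add_sub_cancel]; exact hy)
    have := ZMod.val_lt (y - b)
    omega
  refine ⟨hD, fun hp => hp.elim (fun hpX => ?_) hpY, fun hq => hq.elim (fun hqX => ?_) ?_⟩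
  · rw [hX, add_sub_cancel_left, ZMod.val_natCast_of_lt (by omega)] at hpX
    omega
  · rw [hX, sub_sub_cancel_left, ZMod.val_neg_one_eq] at hqX
    omega
  · exact h.sub_notMem hjump1 ((hX b).2 (by simp))

lemma mobiusCirculant_ncard_add_two_le_of_interval (h : AreSeparated (mobiusCirculant k) X Y)
    {b : ZMod (2 * k)} {D : ℕ} (hX : ∀ z, z ∈ X ↔ (z - b).val ≤ D) :
    X.ncard + 2 ≤ (X ∪ Y)ᶜ.ncard ∨ Y.ncard + 2 ≤ (X ∪ Y)ᶜ.ncard := by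
  have hjumpk : (k : ZMod (2 * k)) ∈ ({1, (k : ZMod (2 * k))} : Set _) := .inr rfl
  obtain ⟨hD, hpS, hqS⟩ := h.mobiusCirculant_interval_ends hX
  have hpoff : (b + ((D + 1 : ℕ) : ZMod (2 * k)) - b).val = D + 1 := by
    rw [add_sub_cancel_left, ZMod.val_natCast_of_lt (by omega)]
  have hqoff : (b - 1 - b).val = 2 * k - 1 := by rw [sub_sub_cancel_left, ZMod.val_neg_one_eq]
  have hshift : ∀ z : ZMod (2 * k),
      (z + k - b).val = (z - b).val + k ∨ (z + k - b).val + 2 * k = (z - b).val + k := by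
    intro z
    have hkval : (k : ZMod (2 * k)).val = k := ZMod.val_natCast_of_lt (by omega)
    have := ZMod.val_add_eq_or (z - b) k
    rwa [hkval, ← add_sub_right_comm] at this
  have hne : ∀ {w w' : ZMod (2 * k)}, (w - b).val ≠ (w' - b).val → w ≠ w' :=
    fun hww' he => hww' (he ▸ rfl)
  have hpq : b + ((D + 1 : ℕ) : ZMod (2 * k)) ≠ b - 1 := hne (by rw [hpoff, hqoff]; omega)
  have hS : ∀ w, w ∉ X → w ∉ Y → w ∈ (X ∪ Y)ᶜ := fun w hwX hwY hw => hw.elim hwX hwY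
  rcases le_or_gt (D + 2) k with hshort | hlong
  · -- `X` has fewer than `k` points, so `X + k` is disjoint from `X`
    refine .inl (Set.ncard_add_two_le_of_injective (add_left_injective (k : ZMod (2 * k)))
      hpq hpS hqS fun x hx => ?_)
    have hxD := (hX x).1 hx
    have hxk := hshift x
    refine ⟨hS _ (by rw [hX]; omega) (h.add_notMem hjumpk hx), hne ?_, hne ?_⟩ <;>
      simp only [hpoff, hqoff] <;> omega
  · -- `Y` lies in the complementary arc, which has at most `k` points, so `Y + k ⊆ X`
    refine .inr (Set.ncard_add_two_le_of_injective (add_left_injective (k : ZMod (2 * k)))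
      hpq hpS hqS fun y hy => ?_)
    have hyD : D < (y - b).val := not_le.1 fun hle => h.disjoint.ne_of_mem ((hX y).2 hle) hy rfl
    have hyk := hshift y
    have := ZMod.val_lt (y - b)
    have := ZMod.val_lt (y + (k : ZMod (2 * k)) - b)
    have hykX : y + k ∈ X := (hX _).2 (by omega)
    refine ⟨hS _ (h.symm.add_notMem hjumpk hy) (fun hyk' => h.disjoint.ne_of_mem hykX hyk' rfl),
      hne ?_, hne ?_⟩ <;>
      simp only [hpoff, hqoff] <;> omega

theorem mobiusCirculant_separator_bound (h : AreSeparated (mobiusCirculant k) X Y) :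
    4 ≤ (X ∪ Y)ᶜ.ncard ∨ X.ncard + 2 ≤ (X ∪ Y)ᶜ.ncard ∨ Y.ncard + 2 ≤ (X ∪ Y)ᶜ.ncard := by
  have hends := h.ncard_rightEnds_add_le (.inl rfl)
  have hX := (Set.ncard_pos).2 (rightEnds_nonempty h.left_nonempty h.compl_left_nonempty)
  have hY := (Set.ncard_pos).2 (rightEnds_nonempty h.right_nonempty h.symm.compl_left_nonempty)
  by_cases hX1 : (rightEnds X).ncard = 1
  · obtain ⟨b, D, hb⟩ :=
      exists_mem_iff_val_sub_le_of_ncard_rightEnds h.compl_left_nonempty hX1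
    have := h.mobiusCirculant_ncard_add_two_le_of_interval hb
    omega
  by_cases hY1 : (rightEnds Y).ncard = 1
  · obtain ⟨b, D, hb⟩ :=
      exists_mem_iff_val_sub_le_of_ncard_rightEnds h.symm.compl_left_nonempty hY1
    have := h.symm.mobiusCirculant_ncard_add_two_le_of_interval hb
    rw [Set.union_comm] at this
    omega
  omega

end AreSeparated

def ladderIndex (k : ℕ) : Fin k ⊕ Fin k → ℕ :=
  Sum.elim (fun i => i) (fun i => k + i)

lemma ladderIndex_lt {k : ℕ} (a : Fin k ⊕ Fin k) : ladderIndex k a < 2 * k := by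
  rcases a with i | i <;> simp only [ladderIndex, Sum.elim_inl, Sum.elim_inr] <;> omega

lemma ladderIndex_injective (k : ℕ) : (ladderIndex k).Injective := by
  rintro (i | i) (j | j) h <;>
    simp only [ladderIndex, Sum.elim_inl, Sum.elim_inr, Sum.inl.injEq, Sum.inr.injEq,
      reduceCtorEq, Fin.ext_iff] at h ⊢ <;> omega

lemma mobiusCirculant_adj_natCast_iff {k x y : ℕ} [NeZero k] (hx : x < 2 * k) (hy : y < 2 * k) :
    (mobiusCirculant k).Adj x y ↔ x ≠ y ∧ (x = y + 1 ∨ x + 2 * k = y + 1 ∨ x = y + k ∨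
      x + 2 * k = y + k ∨ y = x + 1 ∨ y + 2 * k = x + 1 ∨ y = x + k ∨ y + 2 * k = x + k) := by
  have h1 : 1 < 2 * k := by have := NeZero.pos k; omega
  have hk : k < 2 * k := by have := NeZero.pos k; omega
  simp only [mobiusCirculant, SimpleGraph.circulantGraph_adj, Set.mem_insert_iff,
    Set.mem_singleton_iff, ← Nat.cast_one (R := ZMod (2 * k)),
    ZMod.natCast_sub_natCast_eq_iff hx hy h1, ZMod.natCast_sub_natCast_eq_iff hx hy hk,
    ZMod.natCast_sub_natCast_eq_iff hy hx h1, ZMod.natCast_sub_natCast_eq_iff hy hx hk,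
    Ne, ZMod.natCast_eq_natCast_iff_of_lt hx hy]
  tauto

noncomputable def mobiusLadderIso (k : ℕ) [NeZero k] : mobiusLadder k ≃g mobiusCirculant k where
  toEquiv := Equiv.ofBijective (fun a => (ladderIndex k a : ZMod (2 * k))) <| by
    refine (Fintype.bijective_iff_injective_and_card _).2 ⟨fun a b h => ?_, by
      rw [Fintype.card_sum, Fintype.card_fin, ZMod.card, two_mul]⟩
    exact ladderIndex_injective k
      ((ZMod.natCast_eq_natCast_iff_of_lt (ladderIndex_lt a) (ladderIndex_lt b)).1 h)
  map_rel_iff' := by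
    intro a b
    simp only [Equiv.ofBijective_apply]
    rw [mobiusCirculant_adj_natCast_iff (ladderIndex_lt a) (ladderIndex_lt b)]
    rcases a with i | i <;> rcases b with j | j <;>
      simp only [mobiusLadder, SimpleGraph.fromRel_adj, ladderIndex, Sum.elim_inl, Sum.elim_inr,
        ne_eq, Sum.inl.injEq, Sum.inr.injEq, reduceCtorEq, Fin.ext_iff, not_false_eq_true,
        true_and, or_false, false_or]
    all_goals have := i.isLt; have := j.isLt; omega

lemma AreSeparated.mobiusLadder_separator_bound {k : ℕ} [NeZero k] {X Y : Set (Fin k ⊕ Fin k)}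
    (h : AreSeparated (mobiusLadder k) X Y) :
    4 ≤ (X ∪ Y)ᶜ.ncard ∨ X.ncard + 2 ≤ (X ∪ Y)ᶜ.ncard ∨ Y.ncard + 2 ≤ (X ∪ Y)ᶜ.ncard := by
  let e := mobiusLadderIso k
  have hcompl : (e '' X ∪ e '' Y)ᶜ = e '' (X ∪ Y)ᶜ := by
    rw [← Set.image_union, Set.image_compl_eq e.bijective]
  simpa only [hcompl, Set.ncard_image_of_injective _ e.injective] using
    (h.image e).mobiusCirculant_separator_bound

/-- For every `k ≥ 4`, the `k`-rung Möbius ladder `M_k` is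
almost 4-connected. -/
theorem stmt_5 (k : ℕ) (hk : 4 ≤ k) : AlmostFourConnected (mobiusLadder k) := by
  have : NeZero k := ⟨by omega⟩
  exact almostFourConnected_of_separator_bound
    (by rw [Fintype.card_sum, Fintype.card_fin]; omega)
    fun _ _ h => h.mobiusLadder_separator_bound
end

section
/- For every integer k ≥ 1, the graph obtained from a cycle of length 2k+1 by adding an edge joining every pair of vertices at distance exactly k is a minor of the (2k+1)-rung Möbius ladder M_{2k+1}. -/
/-!
Walking `v_1, …, v_n, u_1, …, u_n` and back to `v_1` is a Hamiltonian cycle of the Möbius ladder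
`M_n` of length `2n`, and the rungs are exactly the chords joining antipodal positions `m` and
`m + n`. For `n = 2k + 1`, take as branch set of vertex `i` the pair of consecutive positions
`2i, 2i + 1`. The cycle edge from position `2i + 1` to `2i + 2` joins the branch sets of `i` and
`i + 1`, and the rung from position `2i` to `2i + 2k + 1 = 2(i + k) + 1` joins those of `i` and
`i + k`.
-/

/-- `G` is a minor of `H`: `G` can be obtained from a subgraph of `H` by contracting
edges. Equivalently (for finite graphs, as formalized here), there is a family of
pairwise disjoint nonempty connected "branch sets" in `H`, one for each vertex of `G`,
such that adjacent vertices of `G` have branch sets joined by an edge of `H`. -/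
def IsMinor {α β : Type*} (G : SimpleGraph α) (H : SimpleGraph β) : Prop :=
  ∃ φ : α → Set β,
    (∀ a, (φ a).Nonempty) ∧
    (∀ a, (H.induce (φ a)).Connected) ∧
    (Pairwise (Function.onFun Disjoint φ)) ∧
    (∀ a b, G.Adj a b → ∃ x ∈ φ a, ∃ y ∈ φ b, H.Adj x y)

/-- The graph obtained from a cycle of length `2k+1` by adding an edge joining every
pair of vertices at distance exactly `k` (on the cycle). On a cycle of odd length
`2k+1`, the pairs at distance exactly `k` are exactly the pairs `{i, i+k mod (2k+1)}`. -/
def oddCycleWithLongChords (k : ℕ) : SimpleGraph (Fin (2 * k + 1)) :=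
  SimpleGraph.fromRel (fun i j =>
    (j : ℕ) = ((i : ℕ) + 1) % (2 * k + 1) ∨ (j : ℕ) = ((i : ℕ) + k) % (2 * k + 1))

theorem isMinor_fromRel_of_adj_pairs {α β : Type*} {r : α → α → Prop} {H : SimpleGraph β}
    (x y : α → β) (hxy : ∀ a, H.Adj (x a) (y a))
    (hdisj : Pairwise fun a b => Disjoint ({x a, y a} : Set β) {x b, y b})
    (hr : ∀ a b, r a b → ∃ p ∈ ({x a, y a} : Set β), ∃ q ∈ ({x b, y b} : Set β), H.Adj p q) :
    IsMinor (SimpleGraph.fromRel r) H := by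
  refine ⟨fun a => {x a, y a}, fun a => Set.insert_nonempty _ _,
    fun a => SimpleGraph.induce_pair_connected_of_adj (hxy a), hdisj, fun a b hab => ?_⟩
  rcases (SimpleGraph.fromRel_adj _ _ _).1 hab |>.2 with h | h
  · exact hr a b h
  · obtain ⟨p, hp, q, hq, hpq⟩ := hr b a h
    exact ⟨q, hq, p, hp, hpq.symm⟩

namespace mobiusLadder

variable {n : ℕ}

lemma adj_inl_inl {i j : Fin n} (h : (j : ℕ) = i + 1) :
    (mobiusLadder n).Adj (.inl i) (.inl j) := by
  simp only [mobiusLadder, SimpleGraph.fromRel_adj]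
  exact ⟨by simp [Fin.ext_iff]; omega, .inl h⟩

lemma adj_inr_inr {i j : Fin n} (h : (j : ℕ) = i + 1) :
    (mobiusLadder n).Adj (.inr i) (.inr j) := by
  simp only [mobiusLadder, SimpleGraph.fromRel_adj]
  exact ⟨by simp [Fin.ext_iff]; omega, .inl h⟩

lemma adj_inl_inr {i j : Fin n}
    (h : (i : ℕ) = j ∨ (i : ℕ) = 0 ∧ (j : ℕ) = n - 1 ∨ (j : ℕ) = 0 ∧ (i : ℕ) = n - 1) :
    (mobiusLadder n).Adj (.inl i) (.inr j) := by
  simp only [mobiusLadder, SimpleGraph.fromRel_adj]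
  exact ⟨by simp, .inl h⟩

open Fin.NatCast

variable [NeZero n]

def cycle (n : ℕ) [NeZero n] (m : ℕ) : Fin n ⊕ Fin n :=
  finSumFinEquiv.symm (m : Fin (n + n))

lemma cycle_eq_cycle_iff {a b : ℕ} : cycle n a = cycle n b ↔ a ≡ b [MOD 2 * n] := by
  simp [cycle, Fin.ext_iff, Nat.ModEq, two_mul]

lemma adj_cycle_add_one (m : ℕ) : (mobiusLadder n).Adj (cycle n m) (cycle n (m + 1)) := by
  have hn := NeZero.pos n
  rw [cycle, cycle, Nat.cast_succ]
  generalize (m : Fin (n + n)) = p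
  have hone : ((1 : Fin (n + n)) : ℕ) = 1 := by
    rw [Fin.val_one', Nat.mod_eq_of_lt (by omega)]
  induction p using Fin.addCases with
  | left i =>
    by_cases hi : (i : ℕ) + 1 < n
    · have : Fin.castAdd n i + 1 = Fin.castAdd n ⟨i + 1, hi⟩ := by
        ext
        rw [Fin.val_add, hone, Fin.val_castAdd, Nat.mod_eq_of_lt (by omega)]
        rfl
      rw [this, finSumFinEquiv_symm_apply_castAdd, finSumFinEquiv_symm_apply_castAdd]
      exact adj_inl_inl rfl
    · have : Fin.castAdd n i + 1 = Fin.natAdd n ⟨0, hn⟩ := by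
        ext
        rw [Fin.val_add, hone, Fin.val_castAdd, Fin.val_natAdd, Nat.mod_eq_of_lt (by omega)]
        dsimp only
        omega
      rw [this, finSumFinEquiv_symm_apply_castAdd, finSumFinEquiv_symm_apply_natAdd]
      exact adj_inl_inr (.inr (.inr ⟨rfl, by omega⟩))
  | right i =>
    by_cases hi : (i : ℕ) + 1 < n
    · have : Fin.natAdd n i + 1 = Fin.natAdd n ⟨i + 1, hi⟩ := by
        ext
        rw [Fin.val_add, hone, Fin.val_natAdd, Fin.val_natAdd, Nat.mod_eq_of_lt (by omega)]
        rfl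
      rw [this, finSumFinEquiv_symm_apply_natAdd, finSumFinEquiv_symm_apply_natAdd]
      exact adj_inr_inr rfl
    · have : Fin.natAdd n i + 1 = Fin.castAdd n ⟨0, hn⟩ := by
        ext
        rw [Fin.val_add, hone, Fin.val_castAdd, Fin.val_natAdd,
          show n + i + 1 = n + n by omega, Nat.mod_self]
      rw [this, finSumFinEquiv_symm_apply_castAdd, finSumFinEquiv_symm_apply_natAdd]
      exact (adj_inl_inr (.inr (.inl ⟨rfl, by omega⟩))).symm

lemma adj_cycle_add_self (m : ℕ) : (mobiusLadder n).Adj (cycle n m) (cycle n (m + n)) := by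
  have hn := NeZero.pos n
  rw [cycle, cycle, Nat.cast_add]
  generalize (m : Fin (n + n)) = p
  have hself : ((n : Fin (n + n)) : ℕ) = n := by
    rw [Fin.val_natCast, Nat.mod_eq_of_lt (by omega)]
  induction p using Fin.addCases with
  | left i =>
    have : Fin.castAdd n i + n = Fin.natAdd n i := by
      ext
      rw [Fin.val_add, hself, Fin.val_castAdd, Fin.val_natAdd, Nat.mod_eq_of_lt (by omega)]
      omega
    rw [this, finSumFinEquiv_symm_apply_castAdd, finSumFinEquiv_symm_apply_natAdd]
    exact adj_inl_inr (.inl rfl)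
  | right i =>
    have : Fin.natAdd n i + n = Fin.castAdd n i := by
      ext
      rw [Fin.val_add, hself, Fin.val_castAdd, Fin.val_natAdd,
        show n + i + n = i + (n + n) by omega, Nat.add_mod_right, Nat.mod_eq_of_lt (by omega)]
    rw [this, finSumFinEquiv_symm_apply_castAdd, finSumFinEquiv_symm_apply_natAdd]
    exact (adj_inl_inr (.inl rfl)).symm

lemma cycle_injOn : Set.InjOn (cycle n) (Set.Iio (2 * n)) :=
  fun _ ha _ hb h => (cycle_eq_cycle_iff.1 h).eq_of_lt_of_lt ha hb

lemma disjoint_cycle_pairs {i j : ℕ} (hi : i < n) (hj : j < n) (hij : i ≠ j) :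
    Disjoint ({cycle n (2 * i), cycle n (2 * i + 1)} : Set (Fin n ⊕ Fin n))
      {cycle n (2 * j), cycle n (2 * j + 1)} := by
  rw [Set.disjoint_left]
  rintro _ (rfl | rfl) (h | h) <;>
    exact hij (by
      have := cycle_injOn (Set.mem_Iio.2 (by omega)) (Set.mem_Iio.2 (by omega)) h
      omega)

lemma cycle_two_mul_add_two {i j : ℕ} (h : j ≡ i + 1 [MOD n]) :
    cycle n (2 * i + 1 + 1) = cycle n (2 * j) :=
  cycle_eq_cycle_iff.2 (by simpa [mul_add, add_assoc] using (h.mul_left' 2).symm)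

lemma cycle_two_mul_add_self {k i j : ℕ} (h : j ≡ i + k [MOD 2 * k + 1]) :
    cycle (2 * k + 1) (2 * i + (2 * k + 1)) = cycle (2 * k + 1) (2 * j + 1) :=
  cycle_eq_cycle_iff.2 (by simpa [mul_add, add_assoc] using ((h.mul_left' 2).add_right 1).symm)

end mobiusLadder

theorem stmt_8_general (k : ℕ) :
    IsMinor (oddCycleWithLongChords k) (mobiusLadder (2 * k + 1)) := by
  refine isMinor_fromRel_of_adj_pairs (fun i => mobiusLadder.cycle _ (2 * i))
    (fun i => mobiusLadder.cycle _ (2 * i + 1)) (fun i => mobiusLadder.adj_cycle_add_one _)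
    (fun i j hij => mobiusLadder.disjoint_cycle_pairs i.isLt j.isLt (Fin.val_ne_of_ne hij))
    (fun i j hij => ?_)
  rcases hij with h | h
  · exact ⟨_, .inr rfl, _, .inl (mobiusLadder.cycle_two_mul_add_two (h ▸ Nat.mod_modEq _ _)),
      mobiusLadder.adj_cycle_add_one _⟩
  · exact ⟨_, .inl rfl, _, .inr (mobiusLadder.cycle_two_mul_add_self (h ▸ Nat.mod_modEq _ _)),
      mobiusLadder.adj_cycle_add_self _⟩

/-- for every `k ≥ 1`, the graph obtained from a cycle of length `2k+1`
by joining every pair of vertices at distance exactly `k` is a minor of the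
`(2k+1)`-rung Möbius ladder. -/
theorem stmt_8 (k : ℕ) (hk : 1 ≤ k) :
    IsMinor (oddCycleWithLongChords k) (mobiusLadder (2 * k + 1)) :=
  stmt_8_general k
end
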